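/- arXiv:1103.5151 — 3 statements merged into one kernel-verified Lean document; each statement's English description precedes it below -/
import Mathlib

section
/- The number of basic commutators of weight n on d generators is given by the Witt formula χ_n(d) = (1/n) · Σ_{m|n} μ(m) · d^{n/m}, where μ is the Möbius function. -/
/-- Formal commutators (bracket words) on a set `X` of generators. -/
inductive FormalComm (X : Type) : Type
  | of : X → FormalComm X
  | comm : FormalComm X → FormalComm X → FormalComm X

namespace FormalComm

/-- The weight of a formal commutator. -/
def weight {X : Type} : FormalComm X → ℕ
  | of _ => 1
  | comm b a => weight b + weight a

/-- Basic commutators with respect to a strict order `r` on formal commutators: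
generators are basic of weight 1; `[b,a]` is basic if `b`, `a` are basic, `a < b`,
and whenever `b = [b₁,b₂]` one has `b₂ ≤ a`. -/
inductive IsBasic {X : Type} (r : FormalComm X → FormalComm X → Prop) : FormalComm X → Prop
  | of (x : X) : IsBasic r (.of x)
  | comm (b a : FormalComm X) : IsBasic r b → IsBasic r a → r a b →
      (∀ b₁ b₂, b = .comm b₁ b₂ → ¬ r a b₂) → IsBasic r (.comm b a)

open scoped commutatorElement

/-- Evaluation of a formal commutator in the free group on `X`. -/
def eval {X : Type} : FormalComm X → FreeGroup X
  | of x => FreeGroup.of x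
  | comm b a => ⁅eval b, eval a⁆

end FormalComm

/-- The Witt number `χ_n(d) = (1/n) ∑_{m ∣ n} μ(m) d^{n/m}`. -/
def witt (n d : ℕ) : ℕ :=
  ((∑ m ∈ n.divisors, ArithmeticFunction.moebius m * (d : ℤ) ^ (n / m)) / (n : ℤ)).toNat

/-!
Let `M_n` be the number of multisets of basic commutators of total weight `n` (the monomials of
weight `n` in the basic commutators). The heart of the proof is `M_n = d ^ n`, i.e.
`∑ M_n X^n = (1 - d X)⁻¹`, shown by Lazard elimination for an alphabet with arbitrary positive
weights: if `x` is the `r`-least formal commutator, the basic commutators other than `x` are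
exactly the basic commutators over the alphabet of left-normed commutators `[y, x, …, x]`
(`y ≠ x`), with the induced order. On generating functions this reads
`M_A = (1 - X^{w x})⁻¹ M_{A'}` and `1 - L_A = (1 - X^{w x}) (1 - L_{A'})`, where `L` counts the
generators by weight, so `M (1 - L) = 1` passes from `A'` to `A`. Modulo `X^{N+1}` the induction
terminates: each elimination removes exactly one basic commutator of weight at most `N`, namely `x`.

Counting the pairs (multiset, marked occurrence of a basic commutator `c`) weighted by the
weight of `c` gives `n M_n = ∑_{k ≤ n} (∑_{m ∣ k} m χ_m) M_{n-k}` (the logarithmic derivative of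
`∏_m (1 - X^m)^{-χ_m}`); with `M_n = d ^ n` this forces `∑_{m ∣ k} m χ_m = d ^ k`, and Möbius
inversion gives the Witt formula.
-/

open PowerSeries

lemma Multiset.exists_map_eq_of_forall_mem {α β : Type*} {f : α → β} {p : α → Prop}
    {M : Multiset β} (h : ∀ b ∈ M, ∃ a, p a ∧ f a = b) :
    ∃ M' : Multiset α, (∀ a ∈ M', p a) ∧ M'.map f = M := by
  induction M using Multiset.induction_on with
  | empty => exact ⟨0, by simp, rfl⟩
  | cons b M ih =>
    obtain ⟨a, ha, rfl⟩ := h b (Multiset.mem_cons_self b M)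
    obtain ⟨M', hM', rfl⟩ := ih fun b hb => h b (Multiset.mem_cons_of_mem hb)
    refine ⟨a ::ₘ M', fun a' ha' => ?_, Multiset.map_cons f a M'⟩
    rcases Multiset.mem_cons.mp ha' with rfl | ha'
    exacts [ha, hM' a' ha']

lemma Finset.sum_eq_sum_Icc_card_filter_le {α : Type*} (s : Finset α) (f : α → ℕ) {b : ℕ}
    (hf : ∀ a ∈ s, f a ≤ b) :
    ∑ a ∈ s, f a = ∑ j ∈ Finset.Icc 1 b, (s.filter fun a => j ≤ f a).card := by
  simp only [Finset.card_filter]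
  rw [Finset.sum_comm]
  refine Finset.sum_congr rfl fun a ha => ?_
  rw [← Finset.sum_filter, Finset.sum_const, smul_eq_mul, mul_one,
    show {j ∈ Finset.Icc 1 b | j ≤ f a} = Finset.Icc 1 (f a) by
      ext j; simp only [Finset.mem_filter, Finset.mem_Icc]; have := hf a ha; omega,
    Nat.card_Icc, Nat.add_sub_cancel]

lemma Finset.sum_Icc_div_eq_sum_filter_dvd {M : Type*} [AddCommMonoid M] (g : ℕ → M) {m : ℕ}
    (hm : 0 < m) (n : ℕ) :
    ∑ j ∈ Finset.Icc 1 (n / m), g (j * m) = ∑ k ∈ Finset.Icc 1 n with m ∣ k, g k := by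
  rw [← Finset.sum_image fun i _ j _ h => Nat.eq_of_mul_eq_mul_right hm h]
  congr 1
  ext k
  simp only [Finset.mem_image, Finset.mem_Icc, Finset.mem_filter, Nat.le_div_iff_mul_le hm]
  constructor
  · rintro ⟨j, ⟨hj, hjn⟩, rfl⟩
    exact ⟨⟨Nat.one_le_iff_ne_zero.mpr (by positivity), hjn⟩, dvd_mul_left m j⟩
  · rintro ⟨⟨hk, hkn⟩, j, rfl⟩
    refine ⟨j, ⟨Nat.pos_of_ne_zero ?_, by rwa [mul_comm]⟩, mul_comm j m⟩
    rintro rfl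
    simp at hk

lemma Multiset.sum_map_eq_sum_count_mul {α : Type*} [DecidableEq α] (M : Multiset α) (f : α → ℕ)
    {B : Finset α} (hB : ∀ a ∈ M, a ∈ B) : (M.map f).sum = ∑ a ∈ B, M.count a * f a := by
  rw [Finset.sum_multiset_map_count]
  exact Finset.sum_subset (fun a ha => hB a (Multiset.mem_toFinset.mp ha))
    fun a _ ha => by simp [Multiset.count_eq_zero.mpr (by simpa using ha)]

lemma eq_pow_of_mul_pow_eq_sum {d : ℕ} {a : ℕ → ℕ}
    (h : ∀ n, n * d ^ n = ∑ k ∈ Finset.Icc 1 n, a k * d ^ (n - k)) {n : ℕ} (hn : 0 < n) :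
    a n = d ^ n := by
  induction n using Nat.strong_induction_on with
  | _ n ih =>
  obtain ⟨m, rfl⟩ : ∃ m, n = m + 1 := ⟨n - 1, by omega⟩
  have hlower : ∑ k ∈ Finset.Icc 1 m, a k * d ^ (m + 1 - k) = m * d ^ (m + 1) := by
    rw [Finset.sum_congr rfl fun k hk => ?_, Finset.sum_const, Nat.card_Icc, smul_eq_mul,
      Nat.add_sub_cancel]
    obtain ⟨hk0, hkm⟩ := Finset.mem_Icc.mp hk
    rw [ih k (by omega) hk0, ← pow_add, Nat.add_sub_of_le (by omega)]
  have := h (m + 1)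
  rw [Finset.sum_Icc_succ_top (by omega), hlower, Nat.sub_self, pow_zero, mul_one] at this
  linarith

namespace FormalComm

variable {A : Type}

def wt (w : A → ℕ) : FormalComm A → ℕ
  | of a => w a
  | comm b a => wt w b + wt w a

@[simp] lemma wt_of (w : A → ℕ) (a : A) : wt w (of a) = w a := rfl

@[simp] lemma wt_comm (w : A → ℕ) (b a : FormalComm A) : wt w (comm b a) = wt w b + wt w a := rfl

lemma weight_eq_wt_one : ∀ c : FormalComm A, c.weight = wt (fun _ => 1) c
  | of _ => rfl
  | comm b a => by rw [weight, wt_comm, weight_eq_wt_one b, weight_eq_wt_one a]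

section Weight

variable {w : A → ℕ}

lemma exists_le_wt (w : A → ℕ) : ∀ c : FormalComm A, ∃ a, w a ≤ wt w c
  | of a => ⟨a, le_rfl⟩
  | comm b _ =>
    let ⟨a, ha⟩ := exists_le_wt w b
    ⟨a, ha.trans (Nat.le_add_right _ _)⟩

lemma wt_pos (hw : ∀ a, 0 < w a) (c : FormalComm A) : 0 < wt w c :=
  let ⟨a, ha⟩ := exists_le_wt w c
  (hw a).trans_le ha

lemma finite_setOf_wt_le (hw : ∀ a, 0 < w a) (hfin : ∀ n, {a | w a ≤ n}.Finite) (n : ℕ) :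
    {c : FormalComm A | wt w c ≤ n}.Finite := by
  induction n with
  | zero =>
    refine Set.finite_empty.subset fun c hc => ?_
    have := wt_pos hw c
    simp only [Set.mem_ofPred_eq] at hc
    omega
  | succ n ih =>
    refine (((hfin (n + 1)).image of).union (ih.image2 comm ih)).subset ?_
    rintro (a | ⟨b, a⟩) hc
    · exact Or.inl ⟨a, hc, rfl⟩
    · have := wt_pos hw b
      have := wt_pos hw a
      simp only [Set.mem_ofPred_eq, wt_comm] at hc
      exact Or.inr (Set.mem_image2_of_mem (by simp; omega) (by simp; omega))

end Weight

def basicMultisets (w : A → ℕ) (r : FormalComm A → FormalComm A → Prop) (n : ℕ) :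
    Set (Multiset (FormalComm A)) :=
  {M | (∀ c ∈ M, IsBasic r c) ∧ (M.map (wt w)).sum = n}

section Multisets

variable {w : A → ℕ} {r : FormalComm A → FormalComm A → Prop}

lemma count_mul_wt_le_sum [DecidableEq (FormalComm A)] (M : Multiset (FormalComm A))
    (c : FormalComm A) : M.count c * wt w c ≤ (M.map (wt w)).sum := by
  obtain ⟨u, hu⟩ := Multiset.le_iff_exists_add.mp
    ((Multiset.le_count_iff_replicate_le (s := M) (a := c)).mp le_rfl)
  have := congrArg (fun M => (M.map (wt w)).sum) hu
  simp only [Multiset.map_add, Multiset.sum_add, Multiset.map_replicate, Multiset.sum_replicate,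
    smul_eq_mul] at this
  omega

lemma wt_le_sum {M : Multiset (FormalComm A)} {c : FormalComm A} (hc : c ∈ M) :
    wt w c ≤ (M.map (wt w)).sum :=
  Multiset.le_sum_of_mem (Multiset.mem_map_of_mem _ hc)

lemma finite_basicMultisets (hw : ∀ a, 0 < w a) (hfin : ∀ n, {a | w a ≤ n}.Finite) (n : ℕ) :
    (basicMultisets w r n).Finite := by
  classical
  set S := (finite_setOf_wt_le hw hfin n).toFinset
  refine (n • S.val).powerset.toFinset.finite_toSet.subset fun M ⟨_, hM⟩ => ?_
  simp only [Multiset.mem_toFinset, Multiset.mem_powerset,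
    Finset.mem_coe, Multiset.le_iff_count, Multiset.count_nsmul]
  intro c
  by_cases hc : c ∈ M
  · have hcS : c ∈ S := by simpa [S, ← hM] using wt_le_sum hc
    have := count_mul_wt_le_sum (w := w) M c
    have := wt_pos hw c
    rw [Multiset.count_eq_one_of_mem S.nodup hcS, mul_one]
    nlinarith
  · simp [Multiset.count_eq_zero_of_notMem hc]

lemma basicMultisets_zero (hw : ∀ a, 0 < w a) : basicMultisets w r 0 = {0} := by
  refine Set.eq_singleton_iff_unique_mem.mpr ⟨⟨by simp, by simp⟩, fun M ⟨_, hM⟩ => ?_⟩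
  refine Multiset.eq_zero_of_forall_notMem fun c hc => ?_
  have := wt_le_sum (w := w) hc
  have := wt_pos hw c
  omega

lemma ncard_setOf_le_count [DecidableEq (FormalComm A)] {c : FormalComm A} (hc : IsBasic r c)
    {n j : ℕ} (hj : j * wt w c ≤ n) :
    {M ∈ basicMultisets w r n | j ≤ M.count c}.ncard =
      (basicMultisets w r (n - j * wt w c)).ncard := by
  rw [← Set.ncard_image_of_injective (basicMultisets w r (n - j * wt w c))
    (add_left_injective (Multiset.replicate j c))]
  congr 1
  ext M
  simp only [basicMultisets, Set.mem_ofPred_eq, Set.mem_image]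
  constructor
  · rintro ⟨⟨hbasic, hsum⟩, hcount⟩
    have hle := Multiset.le_count_iff_replicate_le.mp hcount
    refine ⟨M - Multiset.replicate j c, ⟨fun e he => hbasic e (Multiset.mem_of_le tsub_le_self he),
      ?_⟩, tsub_add_cancel_of_le hle⟩
    have := congrArg (fun M => (M.map (wt w)).sum) (tsub_add_cancel_of_le hle)
    simp only [Multiset.map_add, Multiset.sum_add, Multiset.map_replicate,
      Multiset.sum_replicate, smul_eq_mul, hsum] at this
    omega
  · rintro ⟨M, ⟨hbasic, hsum⟩, rfl⟩
    refine ⟨⟨fun e he => ?_, ?_⟩, by simp⟩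
    · rcases Multiset.mem_add.mp he with he | he
      · exact hbasic e he
      · rwa [Multiset.eq_of_mem_replicate he]
    · simp only [Multiset.map_add, Multiset.sum_add, hsum, Multiset.map_replicate,
        Multiset.sum_replicate, smul_eq_mul]
      omega

lemma ncard_setOf_mem [DecidableEq (FormalComm A)] {c : FormalComm A} (hc : IsBasic r c)
    (n : ℕ) : {M ∈ basicMultisets w r n | c ∈ M}.ncard =
      if wt w c ≤ n then (basicMultisets w r (n - wt w c)).ncard else 0 := by
  split_ifs with h
  · simpa [Multiset.one_le_count_iff_mem] using ncard_setOf_le_count hc (j := 1) (by simpa)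
  · convert Set.ncard_empty (Multiset (FormalComm A))
    refine Set.eq_empty_of_forall_notMem fun M ⟨⟨_, hM⟩, hcM⟩ => ?_
    exact h (hM ▸ wt_le_sum hcM)

end Multisets

/-- The generators left after eliminating `x` (Lazard elimination): `(y, k)` stands for the
left-normed commutator `[y, x, …, x]` with `k` copies of `x`. -/
abbrev ElimAlphabet (x : A) : Type := {y : A // y ≠ x} × ℕ

def elimWeight (w : A → ℕ) (x : A) (p : ElimAlphabet x) : ℕ := w p.1 + p.2 * w x

def leftNormed (x y : A) : ℕ → FormalComm A
  | 0 => of y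
  | k + 1 => comm (leftNormed x y k) (of x)

def elimEmb (x : A) : FormalComm (ElimAlphabet x) → FormalComm A
  | of p => leftNormed x p.1 p.2
  | comm b a => comm (elimEmb x b) (elimEmb x a)

section Elimination

variable {w : A → ℕ} {x y : A}

lemma wt_leftNormed (k : ℕ) : wt w (leftNormed x y k) = w y + k * w x := by
  induction k with
  | zero => simp [leftNormed]
  | succ k ih => simp only [leftNormed, wt_comm, ih, wt_of]; ring

lemma wt_elimEmb : ∀ c, wt w (elimEmb x c) = wt (elimWeight w x) c
  | of p => wt_leftNormed p.2
  | comm b a => by simp only [elimEmb, wt_comm, wt_elimEmb b, wt_elimEmb a]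

lemma eq_of_leftNormed_eq_comm {k : ℕ} {b a : FormalComm A} (h : leftNormed x y k = comm b a) :
    a = of x := by
  cases k <;> simp_all [leftNormed]

lemma leftNormed_ne_of (hy : y ≠ x) (k : ℕ) : leftNormed x y k ≠ of x := by
  cases k <;> simp [leftNormed, hy]

lemma elimEmb_ne_of : ∀ c, elimEmb x c ≠ of x
  | of p => leftNormed_ne_of p.1.2 p.2
  | comm _ _ => by simp [elimEmb]

lemma leftNormed_inj {y' : A} {k k' : ℕ} (h : leftNormed x y k = leftNormed x y' k') :
    y = y' ∧ k = k' := by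
  induction k generalizing k' with
  | zero => cases k' <;> simp_all [leftNormed]
  | succ k ih =>
    cases k' with
    | zero => simp [leftNormed] at h
    | succ k' => simpa using ih (comm.inj h).1

lemma elimEmb_injective (x : A) : Function.Injective (elimEmb x) := by
  intro c c' h
  induction c generalizing c' with
  | of p =>
    cases c' with
    | of p' =>
      obtain ⟨hy, hk⟩ := leftNormed_inj h
      exact congrArg of (Prod.ext (Subtype.ext hy) hk)
    | comm b' a' => exact absurd (eq_of_leftNormed_eq_comm h) (elimEmb_ne_of a')
  | comm b a ihb iha =>
    cases c' with
    | of p' => exact absurd (eq_of_leftNormed_eq_comm h.symm) (elimEmb_ne_of a)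
    | comm b' a' => rw [ihb (comm.inj h).1, iha (comm.inj h).2]

instance {r : FormalComm A → FormalComm A → Prop} [IsStrictTotalOrder (FormalComm A) r] :
    IsStrictTotalOrder (FormalComm (ElimAlphabet x)) (InvImage r (elimEmb x)) where
  trichotomous := (InvImage.trichotomous (elimEmb_injective x)).trichotomous
  irrefl c := irrefl (elimEmb x c)
  trans _ _ _ := trans_of r

variable {r : FormalComm A → FormalComm A → Prop} [IsStrictTotalOrder (FormalComm A) r]

lemma isBasic_leftNormed (hx : ∀ c, c ≠ of x → r (of x) c) (hy : y ≠ x) :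
    ∀ k, IsBasic r (leftNormed x y k)
  | 0 => .of y
  | k + 1 => .comm _ _ (isBasic_leftNormed hx hy k) (.of x) (hx _ (leftNormed_ne_of hy k))
      fun _ _ h => eq_of_leftNormed_eq_comm h ▸ irrefl _

lemma isBasic_elimEmb (hx : ∀ c, c ≠ of x → r (of x) c) {c : FormalComm (ElimAlphabet x)}
    (hc : IsBasic (InvImage r (elimEmb x)) c) : IsBasic r (elimEmb x c) := by
  induction hc with
  | of p => exact isBasic_leftNormed hx p.1.2 p.2
  | comm b a _ _ hab hcond ihb iha =>
    refine .comm _ _ ihb iha hab fun b₁ b₂ hb hab₂ => ?_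
    cases b with
    | of p =>
      cases eq_of_leftNormed_eq_comm hb
      exact asymm hab₂ (hx _ (elimEmb_ne_of a))
    | comm b₁' b₂' =>
      obtain ⟨rfl, rfl⟩ := comm.inj hb
      exact hcond _ _ rfl hab₂

lemma exists_eq_leftNormed (hx : ∀ c, c ≠ of x → r (of x) c) :
    ∀ b : FormalComm A, IsBasic r (comm b (of x)) → ∃ y k, y ≠ x ∧ b = leftNormed x y k
  | of y, .comm _ _ _ _ hxy _ => ⟨y, 0, by rintro rfl; exact irrefl _ hxy, rfl⟩
  | comm b₁ b₂, .comm _ _ hb _ _ hcond => by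
    obtain rfl : b₂ = of x := by_contra fun h => hcond b₁ b₂ rfl (hx b₂ h)
    obtain ⟨y, k, hy, rfl⟩ := exists_eq_leftNormed hx b₁ hb
    exact ⟨y, k + 1, hy, rfl⟩

lemma exists_elimEmb_eq (hx : ∀ c, c ≠ of x → r (of x) c) {c : FormalComm A}
    (hc : IsBasic r c) (hcx : c ≠ of x) :
    ∃ c', IsBasic (InvImage r (elimEmb x)) c' ∧ elimEmb x c' = c := by
  induction hc with
  | of y => exact ⟨of (⟨y, fun h => hcx (h ▸ rfl)⟩, 0), .of _, rfl⟩
  | comm b a hb ha hab hcond ihb iha =>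
    by_cases hax : a = of x
    · subst hax
      obtain ⟨y, k, hy, rfl⟩ := exists_eq_leftNormed hx b (.comm _ _ hb ha hab hcond)
      exact ⟨of (⟨y, hy⟩, k + 1), .of _, rfl⟩
    · have hbx : b ≠ of x := by rintro rfl; exact asymm hab (hx a hax)
      obtain ⟨a', ha', rfl⟩ := iha hax
      obtain ⟨b', hb', rfl⟩ := ihb hbx
      exact ⟨comm b' a', .comm _ _ hb' ha' hab fun b₁ b₂ h => by subst h; exact hcond _ _ rfl, rfl⟩

lemma image_elimEmb_setOf_isBasic (hx : ∀ c, c ≠ of x → r (of x) c) :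
    elimEmb x '' {c | IsBasic (InvImage r (elimEmb x)) c} = {c | IsBasic r c} \ {of x} := by
  ext c
  constructor
  · rintro ⟨c', hc', rfl⟩
    exact ⟨isBasic_elimEmb hx hc', elimEmb_ne_of c'⟩
  · rintro ⟨hc, hcx⟩
    exact exists_elimEmb_eq hx hc hcx

end Elimination

section ElimCount

variable {w : A → ℕ} {x : A}

lemma elimWeight_pos (hw : ∀ a, 0 < w a) (p : ElimAlphabet x) : 0 < elimWeight w x p :=
  (hw p.1).trans_le (Nat.le_add_right _ _)

lemma finite_setOf_elimWeight_le (hw : ∀ a, 0 < w a) (hfin : ∀ n, {a | w a ≤ n}.Finite)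
    (n : ℕ) : {p : ElimAlphabet x | elimWeight w x p ≤ n}.Finite := by
  have hinj : Function.Injective fun p : ElimAlphabet x => ((p.1 : A), p.2) :=
    fun p q h => Prod.ext (Subtype.ext (Prod.ext_iff.1 h).1) (Prod.ext_iff.1 h).2
  refine (((hfin n).prod (Set.finite_Iic n)).preimage hinj.injOn).subset fun p hp => ?_
  have := hw x
  simp only [elimWeight, Set.mem_ofPred_eq] at hp
  exact ⟨by simp; omega, by simp; nlinarith⟩

lemma ncard_setOf_elimWeight_eq (hw : ∀ a, 0 < w a) (hfin : ∀ n, {a | w a ≤ n}.Finite)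
    (j : ℕ) : {p : ElimAlphabet x | elimWeight w x p = j}.ncard =
      {y : {y // y ≠ x} | w y = j}.ncard +
        {p : ElimAlphabet x | elimWeight w x p + w x = j}.ncard := by
  have hsplit : {p : ElimAlphabet x | elimWeight w x p = j} =
      (fun y => (y, 0)) '' {y : {y // y ≠ x} | w y = j} ∪
        (fun p => (p.1, p.2 + 1)) '' {p | elimWeight w x p + w x = j} := by
    ext ⟨y, _ | k⟩
    · simp [elimWeight]
    · simp [elimWeight, add_mul, add_assoc]
  have hfinite : {p : ElimAlphabet x | elimWeight w x p = j}.Finite :=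
    (finite_setOf_elimWeight_le hw hfin j).subset fun p hp => hp.le
  rw [hsplit] at hfinite ⊢
  rw [Set.ncard_union_eq ?_ (hfinite.subset Set.subset_union_left)
      (hfinite.subset Set.subset_union_right),
    Set.ncard_image_of_injective _ fun y y' h => (Prod.ext_iff.1 h).1,
    Set.ncard_image_of_injective _ fun p q h => by
      simp only [Prod.mk.injEq, add_left_inj] at h
      exact Prod.ext h.1 h.2]
  rw [Set.disjoint_left]
  rintro _ ⟨y, -, rfl⟩ ⟨p, -, h⟩
  exact Nat.succ_ne_zero _ (Prod.ext_iff.1 h).2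

variable {r : FormalComm A → FormalComm A → Prop} [IsStrictTotalOrder (FormalComm A) r]

lemma image_map_elimEmb_basicMultisets (hx : ∀ c, c ≠ of x → r (of x) c) (n : ℕ) :
    Multiset.map (elimEmb x) '' basicMultisets (elimWeight w x) (InvImage r (elimEmb x)) n =
      {M ∈ basicMultisets w r n | of x ∉ M} := by
  have hwt (M' : Multiset (FormalComm (ElimAlphabet x))) :
      ((M'.map (elimEmb x)).map (wt w)).sum = (M'.map (wt (elimWeight w x))).sum := by
    rw [Multiset.map_map]
    exact congrArg _ (Multiset.map_congr rfl fun c _ => wt_elimEmb c)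
  ext M
  constructor
  · rintro ⟨M', ⟨hbasic, hsum⟩, rfl⟩
    refine ⟨⟨?_, hwt M' ▸ hsum⟩, ?_⟩
    · simp only [Multiset.mem_map]
      rintro _ ⟨c', hc', rfl⟩
      exact isBasic_elimEmb hx (hbasic c' hc')
    · simpa using fun c' _ => elimEmb_ne_of c'
  · rintro ⟨⟨hbasic, hsum⟩, hxM⟩
    obtain ⟨M', hM', rfl⟩ := Multiset.exists_map_eq_of_forall_mem fun c hc =>
      exists_elimEmb_eq hx (hbasic c hc) (by rintro rfl; exact hxM hc)
    exact ⟨M', ⟨hM', hwt M' ▸ hsum⟩, rfl⟩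

lemma ncard_basicMultisets_eq_elim (hx : ∀ c, c ≠ of x → r (of x) c) (hw : ∀ a, 0 < w a)
    (hfin : ∀ n, {a | w a ≤ n}.Finite) (n : ℕ) :
    (basicMultisets w r n).ncard =
      (basicMultisets (elimWeight w x) (InvImage r (elimEmb x)) n).ncard +
        if w x ≤ n then (basicMultisets w r (n - w x)).ncard else 0 := by
  classical
  rw [← Set.ncard_inter_add_ncard_sdiff_eq_ncard (basicMultisets w r n) {M | of x ∈ M}
    (finite_basicMultisets hw hfin n), add_comm]
  congr 1
  · rw [← Set.ncard_image_of_injective _ (Multiset.map_injective (elimEmb_injective x)),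
      image_map_elimEmb_basicMultisets hx]
    rfl
  · exact ncard_setOf_mem (.of x) n

lemma ncard_setOf_isBasic_elim_add_one (hx : ∀ c, c ≠ of x → r (of x) c) (hw : ∀ a, 0 < w a)
    (hfin : ∀ n, {a | w a ≤ n}.Finite) {N : ℕ} (hxN : w x ≤ N) :
    {c | IsBasic (InvImage r (elimEmb x)) c ∧ wt (elimWeight w x) c ≤ N}.ncard + 1 =
      {c | IsBasic r c ∧ wt w c ≤ N}.ncard := by
  have himage : elimEmb x '' {c | IsBasic (InvImage r (elimEmb x)) c ∧ wt (elimWeight w x) c ≤ N}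
      = {c | IsBasic r c ∧ wt w c ≤ N} \ {of x} := by
    have := Set.image_inter_preimage (elimEmb x) {c | IsBasic (InvImage r (elimEmb x)) c}
      {c | wt w c ≤ N}
    simp only [image_elimEmb_setOf_isBasic hx, Set.preimage_ofPred_eq, wt_elimEmb] at this
    refine this.trans (Set.ext fun c => ?_)
    simp only [Set.mem_inter_iff, Set.mem_sdiff, Set.mem_ofPred_eq]
    tauto
  rw [← Set.ncard_image_of_injective _ (elimEmb_injective x), himage,
    Set.ncard_sdiff_singleton_add_one
      (show of x ∈ {c | IsBasic r c ∧ wt w c ≤ N} from ⟨.of x, hxN⟩)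
      ((finite_setOf_wt_le hw hfin N).subset fun c hc => hc.2)]

end ElimCount

section Series

-- `ncard` is `0` on infinite sets: these series are meaningful when each weight is taken by
-- finitely many generators.
noncomputable def letterSeries (w : A → ℕ) : ℤ⟦X⟧ := mk fun n => ({a | w a = n}.ncard : ℤ)

noncomputable def multisetSeries (w : A → ℕ) (r : FormalComm A → FormalComm A → Prop) : ℤ⟦X⟧ :=
  mk fun n => ((basicMultisets w r n).ncard : ℤ)

variable {w : A → ℕ} {x : A}

lemma letterSeries_eq_add (hfin : ∀ n, {a | w a ≤ n}.Finite) (x : A) :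
    letterSeries w = letterSeries (fun y : {y // y ≠ x} => w y) + X ^ w x := by
  ext j
  have hsdiff : {a | w a = j} \ {a | a ≠ x} = if j = w x then {x} else ∅ := by
    ext a
    split_ifs with h <;> simp only [Set.mem_sdiff, Set.mem_ofPred_eq, not_not,
      Set.mem_singleton_iff, Set.mem_empty_iff_false]
    · exact ⟨fun h' => h'.2, fun ha => ⟨ha ▸ h.symm, ha⟩⟩
    · exact iff_false_intro fun ⟨h', ha⟩ => h (ha ▸ h'.symm)
  rw [map_add, letterSeries, letterSeries, coeff_mk, coeff_mk, coeff_X_pow,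
    ← Set.ncard_inter_add_ncard_sdiff_eq_ncard {a | w a = j} {a | a ≠ x}
      ((hfin j).subset fun a ha => ha.le), hsdiff]
  have := Set.ncard_subtype (fun y => y ≠ x) {a | w a = j}
  simp only [Set.mem_ofPred_eq] at this
  rw [this]
  split_ifs <;> simp

lemma letterSeries_elimWeight_mul (hw : ∀ a, 0 < w a) (hfin : ∀ n, {a | w a ≤ n}.Finite) :
    letterSeries (elimWeight w x) * (1 - X ^ w x) =
      letterSeries (fun y : {y // y ≠ x} => w y) := by
  ext j
  rw [mul_sub, mul_one, map_sub, letterSeries, letterSeries, coeff_mul_X_pow', coeff_mk,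
    coeff_mk, coeff_mk, ncard_setOf_elimWeight_eq hw hfin j]
  split_ifs with h
  · have : {p : ElimAlphabet x | elimWeight w x p + w x = j} =
        {p | elimWeight w x p = j - w x} := by
      ext p
      simp only [Set.mem_ofPred_eq]
      omega
    rw [this]
    push_cast
    ring
  · have : {p : ElimAlphabet x | elimWeight w x p + w x = j} = ∅ :=
      Set.eq_empty_of_forall_notMem fun p (hp : _ = j) => h (hp ▸ Nat.le_add_left _ _)
    simp [this]

lemma one_sub_letterSeries_eq (hw : ∀ a, 0 < w a) (hfin : ∀ n, {a | w a ≤ n}.Finite) :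
    1 - letterSeries w = (1 - X ^ w x) * (1 - letterSeries (elimWeight w x)) := by
  linear_combination letterSeries_elimWeight_mul (x := x) hw hfin - letterSeries_eq_add hfin x

variable {r : FormalComm A → FormalComm A → Prop} [IsStrictTotalOrder (FormalComm A) r]

lemma multisetSeries_mul_one_sub_X_pow (hx : ∀ c, c ≠ of x → r (of x) c) (hw : ∀ a, 0 < w a)
    (hfin : ∀ n, {a | w a ≤ n}.Finite) :
    multisetSeries w r * (1 - X ^ w x) =
      multisetSeries (elimWeight w x) (InvImage r (elimEmb x)) := by
  ext n
  rw [mul_sub, mul_one, map_sub, multisetSeries, multisetSeries, coeff_mul_X_pow', coeff_mk,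
    coeff_mk, coeff_mk, ncard_basicMultisets_eq_elim hx hw hfin n]
  split_ifs <;> push_cast <;> ring

end Series

section Induction

variable {w : A → ℕ} {r : FormalComm A → FormalComm A → Prop} {N : ℕ}

lemma X_pow_dvd_letterSeries (hN : ∀ a, N < w a) : X ^ (N + 1) ∣ letterSeries w :=
  X_pow_dvd_iff.mpr fun m hm => by
    have : {a | w a = m} = ∅ := Set.eq_empty_of_forall_notMem fun a (ha : w a = m) => by
      have := hN a
      omega
    simp [letterSeries, this]

lemma X_pow_dvd_multisetSeries_sub_one (hw : ∀ a, 0 < w a) (hN : ∀ a, N < w a) :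
    X ^ (N + 1) ∣ multisetSeries w r - 1 := by
  refine X_pow_dvd_iff.mpr fun m hm => ?_
  rcases Nat.eq_zero_or_pos m with rfl | hm0
  · simp [multisetSeries, basicMultisets_zero hw]
  · have : basicMultisets w r m = ∅ := by
      refine Set.eq_empty_of_forall_notMem fun M ⟨_, hM⟩ => ?_
      obtain ⟨c, hc⟩ := Multiset.exists_mem_of_ne_zero (s := M) (by rintro rfl; simp at hM; omega)
      obtain ⟨a, ha⟩ := exists_le_wt w c
      have := wt_le_sum (w := w) hc
      have := hN a
      omega
    simp [multisetSeries, this, coeff_one, hm0.ne']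

variable [IsStrictTotalOrder (FormalComm A) r]

/-- The `r`-least formal commutator of weight at most `N` is a generator, since `[b, a]` lies
above the lighter `b`; by `hwt` it also lies below everything heavier. -/
lemma exists_forall_ne_rel_of (hw : ∀ a, 0 < w a) (hfin : ∀ n, {a | w a ≤ n}.Finite)
    (hwt : ∀ a b, wt w a < wt w b → r a b) {a₀ : A} (ha₀ : w a₀ ≤ N) :
    ∃ x, w x ≤ N ∧ ∀ c, c ≠ of x → r (of x) c := by
  obtain ⟨⟨m, hmN⟩, -, hmin⟩ := ((finite_setOf_wt_le hw hfin N).wellFoundedOn (r := r)).has_min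
    Set.univ ⟨⟨of a₀, ha₀⟩, trivial⟩
  have hmin' : ∀ c, wt w c ≤ N → ¬ r c m := fun c hc => hmin ⟨c, hc⟩ trivial
  have hm : ∀ c, c ≠ m → r m c := fun c hcm => by
    rcases trichotomous_of r m c with h | rfl | h
    · exact h
    · exact absurd rfl hcm
    · by_cases hcN : wt w c ≤ N
      · exact absurd h (hmin' c hcN)
      · exact hwt _ _ (by simp only [Set.mem_ofPred_eq] at hmN; omega)
  cases m with
  | of x => exact ⟨x, hmN, hm⟩
  | comm b a =>
    have := wt_pos hw a
    simp only [Set.mem_ofPred_eq, wt_comm] at hmN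
    exact (hmin' b (by omega) (hwt _ _ (by simp; omega))).elim

theorem X_pow_dvd_multisetSeries_mul_one_sub_letterSeries_sub_one (hw : ∀ a, 0 < w a)
    (hfin : ∀ n, {a | w a ≤ n}.Finite) (hwt : ∀ a b, wt w a < wt w b → r a b) :
    X ^ (N + 1) ∣ multisetSeries w r * (1 - letterSeries w) - 1 := by
  obtain ⟨s, hs⟩ : ∃ s, {c | IsBasic r c ∧ wt w c ≤ N}.ncard = s := ⟨_, rfl⟩
  induction s using Nat.strong_induction_on generalizing A with
  | _ s ih =>
  by_cases hN : ∀ a, N < w a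
  · rw [show multisetSeries w r * (1 - letterSeries w) - 1 =
      (multisetSeries w r - 1) - multisetSeries w r * letterSeries w by ring]
    exact dvd_sub (X_pow_dvd_multisetSeries_sub_one hw hN)
      (dvd_mul_of_dvd_right (X_pow_dvd_letterSeries hN) _)
  obtain ⟨a₀, ha₀⟩ : ∃ a, w a ≤ N := by simpa using hN
  obtain ⟨x, hxN, hx⟩ := exists_forall_ne_rel_of hw hfin hwt ha₀
  have hcount := ncard_setOf_isBasic_elim_add_one hx hw hfin hxN
  rw [one_sub_letterSeries_eq (x := x) hw hfin, ← mul_assoc,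
    multisetSeries_mul_one_sub_X_pow hx hw hfin]
  exact ih _ (by omega) (elimWeight_pos hw) (finite_setOf_elimWeight_le hw hfin)
    (fun a b h => hwt _ _ (by rwa [wt_elimEmb, wt_elimEmb])) rfl

theorem multisetSeries_mul_one_sub_letterSeries (hw : ∀ a, 0 < w a)
    (hfin : ∀ n, {a | w a ≤ n}.Finite) (hwt : ∀ a b, wt w a < wt w b → r a b) :
    multisetSeries w r * (1 - letterSeries w) = 1 :=
  sub_eq_zero.mp <| ext fun n => by
    simpa using X_pow_dvd_iff.mp
      (X_pow_dvd_multisetSeries_mul_one_sub_letterSeries_sub_one (N := n) hw hfin hwt) n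
      n.lt_succ_self

end Induction

section Marking

variable {w : A → ℕ} {r : FormalComm A → FormalComm A → Prop}

lemma sum_count_eq_sum_ncard [DecidableEq (FormalComm A)] (hw : ∀ a, 0 < w a)
    (hfin : ∀ n, {a | w a ≤ n}.Finite) {c : FormalComm A} (hc : IsBasic r c) (n : ℕ) :
    ∑ M ∈ (finite_basicMultisets (r := r) hw hfin n).toFinset, M.count c =
      ∑ k ∈ Finset.Icc 1 n with wt w c ∣ k, (basicMultisets w r (n - k)).ncard := by
  have hc0 := wt_pos hw c
  rw [Finset.sum_eq_sum_Icc_card_filter_le _ _ (b := n / wt w c) fun M hM => ?_,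
    ← Finset.sum_Icc_div_eq_sum_filter_dvd _ hc0]
  · refine Finset.sum_congr rfl fun j hj => ?_
    rw [← Set.ncard_coe_finset, ← ncard_setOf_le_count hc, Finset.coe_filter]
    · simp
    · exact (Nat.le_div_iff_mul_le hc0).mp (Finset.mem_Icc.mp hj).2
  · rw [Nat.le_div_iff_mul_le hc0]
    obtain ⟨_, hM⟩ := (Set.Finite.mem_toFinset _).mp hM
    exact hM ▸ count_mul_wt_le_sum M c

lemma sum_wt_filter_dvd_eq {n : ℕ} {B : Finset (FormalComm A)}
    (hB : ∀ c, c ∈ B ↔ IsBasic r c ∧ wt w c ≤ n) {k : ℕ} (hk : k ∈ Finset.Icc 1 n) :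
    ∑ c ∈ B with wt w c ∣ k, wt w c =
      ∑ m ∈ k.divisors, m * {c | IsBasic r c ∧ wt w c = m}.ncard := by
  obtain ⟨hk1, hkn⟩ := Finset.mem_Icc.mp hk
  rw [← Finset.sum_fiberwise_of_maps_to' (t := k.divisors) (fun c hc =>
    Nat.mem_divisors.mpr ⟨(Finset.mem_filter.mp hc).2, by omega⟩) fun m => m]
  refine Finset.sum_congr rfl fun m hm => ?_
  rw [Finset.sum_const, smul_eq_mul, mul_comm, ← Set.ncard_coe_finset]
  have hmk := Nat.divisor_le hm
  have hmdvd := Nat.dvd_of_mem_divisors hm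
  congr 2
  ext c
  simp only [Finset.coe_filter, Finset.mem_filter, hB, Set.mem_ofPred_eq]
  constructor
  · rintro ⟨⟨⟨hc, -⟩, -⟩, rfl⟩
    exact ⟨hc, rfl⟩
  · rintro ⟨hc, rfl⟩
    exact ⟨⟨⟨hc, by omega⟩, hmdvd⟩, rfl⟩

theorem mul_ncard_basicMultisets (hw : ∀ a, 0 < w a) (hfin : ∀ n, {a | w a ≤ n}.Finite)
    (n : ℕ) : n * (basicMultisets w r n).ncard =
      ∑ k ∈ Finset.Icc 1 n, (∑ m ∈ k.divisors, m * {c | IsBasic r c ∧ wt w c = m}.ncard) *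
        (basicMultisets w r (n - k)).ncard := by
  classical
  have hMfin := finite_basicMultisets (r := r) hw hfin n
  have hBfin : {c | IsBasic r c ∧ wt w c ≤ n}.Finite :=
    (finite_setOf_wt_le hw hfin n).subset fun c hc => hc.2
  have hB (c : FormalComm A) : c ∈ hBfin.toFinset ↔ IsBasic r c ∧ wt w c ≤ n :=
    Set.Finite.mem_toFinset _
  calc n * (basicMultisets w r n).ncard
      = ∑ M ∈ hMfin.toFinset, ∑ c ∈ hBfin.toFinset, M.count c * wt w c := by
        rw [Set.ncard_eq_toFinset_card _ hMfin, mul_comm, ← smul_eq_mul, ← Finset.sum_const]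
        refine Finset.sum_congr rfl fun M hM => ?_
        obtain ⟨hbasic, hsum⟩ := (Set.Finite.mem_toFinset _).mp hM
        rw [← Multiset.sum_map_eq_sum_count_mul M _ fun c hc =>
          (hB c).mpr ⟨hbasic c hc, hsum ▸ wt_le_sum hc⟩, hsum]
    _ = ∑ c ∈ hBfin.toFinset, ∑ k ∈ Finset.Icc 1 n with wt w c ∣ k,
          wt w c * (basicMultisets w r (n - k)).ncard := by
        rw [Finset.sum_comm]
        refine Finset.sum_congr rfl fun c hc => ?_
        rw [← Finset.sum_mul, sum_count_eq_sum_ncard hw hfin ((hB c).mp hc).1, Finset.sum_mul]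
        exact Finset.sum_congr rfl fun _ _ => mul_comm _ _
    _ = ∑ k ∈ Finset.Icc 1 n, ∑ c ∈ hBfin.toFinset with wt w c ∣ k,
          wt w c * (basicMultisets w r (n - k)).ncard :=
        Finset.sum_comm' fun c k => by simp only [Finset.mem_filter]; tauto
    _ = _ := Finset.sum_congr rfl fun k hk => by
        rw [← Finset.sum_mul, sum_wt_filter_dvd_eq hB hk]

end Marking

lemma letterSeries_const_one (A : Type) [Finite A] :
    letterSeries (fun _ : A => 1) = C (Nat.card A : ℤ) * X := by
  ext n
  rw [letterSeries, coeff_mk, coeff_C_mul, coeff_X]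
  split_ifs with h
  · simp [h, Set.ncard_univ]
  · simp [Ne.symm h]

theorem ncard_basicMultisets_const_one {A : Type} [Finite A]
    {r : FormalComm A → FormalComm A → Prop} [IsStrictTotalOrder (FormalComm A) r]
    (hwt : ∀ a b, wt (fun _ => 1) a < wt (fun _ => 1) b → r a b) (n : ℕ) :
    (basicMultisets (fun _ : A => 1) r n).ncard = Nat.card A ^ n := by
  have hM := multisetSeries_mul_one_sub_letterSeries (fun _ => one_pos) (fun _ => Set.toFinite _)
    hwt
  rw [letterSeries_const_one] at hM
  have hG : rescale (Nat.card A : ℤ) (mk 1) * (1 - C (Nat.card A : ℤ) * X) = 1 := by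
    simpa [rescale_X] using congrArg (rescale (Nat.card A : ℤ)) (mk_one_mul_one_sub_eq_one ℤ)
  have : multisetSeries (fun _ : A => 1) r = rescale (Nat.card A : ℤ) (mk 1) := by
    calc _ = multisetSeries _ r * (rescale _ (mk 1) * (1 - C _ * X)) := by rw [hG, mul_one]
      _ = _ := by rw [mul_left_comm, hM, mul_one]
  have := congrArg (coeff n) this
  simp only [multisetSeries, coeff_mk, coeff_rescale, Pi.one_apply, mul_one] at this
  exact_mod_cast this

theorem sum_divisors_mul_ncard_isBasic {A : Type} [Finite A]
    {r : FormalComm A → FormalComm A → Prop} [IsStrictTotalOrder (FormalComm A) r]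
    (hwt : ∀ a b, wt (fun _ => 1) a < wt (fun _ => 1) b → r a b) {k : ℕ} (hk : 0 < k) :
    ∑ m ∈ k.divisors, m * {c | IsBasic r c ∧ wt (fun _ : A => 1) c = m}.ncard = Nat.card A ^ k :=
  eq_pow_of_mul_pow_eq_sum (fun n => by
    simpa only [ncard_basicMultisets_const_one hwt] using
      mul_ncard_basicMultisets (r := r) (fun _ => one_pos) (fun _ => Set.toFinite _) n) hk

end FormalComm

/-- The number of basic commutators of weight `n` on `d` generators is given by the
Witt formula `χ_n(d) = (1/n) ∑_{m ∣ n} μ(m) d^{n/m}`. -/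
theorem witt_formula_count_basic_commutators (n d : ℕ) (hn : 1 ≤ n)
    (r : FormalComm (Fin d) → FormalComm (Fin d) → Prop)
    (hr : IsStrictTotalOrder (FormalComm (Fin d)) r)
    (hwt : ∀ a b : FormalComm (Fin d), a.weight < b.weight → r a b) :
    (n : ℤ) * ({c : FormalComm (Fin d) | FormalComm.IsBasic r c ∧ c.weight = n}.ncard : ℤ)
      = ∑ m ∈ n.divisors, ArithmeticFunction.moebius m * (d : ℤ) ^ (n / m) := by
  simp only [FormalComm.weight_eq_wt_one] at hwt ⊢
  have hdivisors (k : ℕ) (hk : 0 < k) : ∑ m ∈ k.divisors,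
      (m * {c | FormalComm.IsBasic r c ∧ FormalComm.wt (fun _ => 1) c = m}.ncard : ℤ) =
        (d : ℤ) ^ k := by
    exact_mod_cast (FormalComm.sum_divisors_mul_ncard_isBasic hwt hk).trans (by simp)
  have hmoebius := ArithmeticFunction.sum_eq_iff_sum_smul_moebius_eq.mp hdivisors n hn
  rw [Nat.sum_divisorsAntidiagonal fun i j => ArithmeticFunction.moebius i • (d : ℤ) ^ j]
    at hmoebius
  rw [← hmoebius]
  simp
end

section
/- Let c₁ ≥ c₂ ≥ 1 and n ≥ 1 with 2n − 2 < 2c₂ − c₁. If β and α are basic commutators on X with β > α, wt(β) ≥ c₁+n+1, wt(α) ≥ c₂+1, and wt(β)+wt(α) ≤ 2n+c₁+c₂+1, then [β,α] is a basic commutator on X. -/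
/-!
If `β = [β₁, β₂]` is basic then `β₂ < β₁`, and since the order refines weight this forces
`wt β₂ ≤ wt β / 2`. The weight bounds give `wt β < 2 wt α`, hence `wt β₂ < wt α`, so `β₂ < α`
and the defining condition for `[β, α]` to be basic holds.
-/

namespace FormalComm

section WeightRefiningOrder

variable {X : Type} {r : FormalComm X → FormalComm X → Prop} [Std.Asymm r]
  (hwt : ∀ a b : FormalComm X, a.weight < b.weight → r a b)
include hwt

theorem weight_le_of_rel {a b : FormalComm X} (hab : r a b) : a.weight ≤ b.weight :=
  not_lt.mp fun hlt => asymm hab (hwt b a hlt)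

theorem IsBasic.two_mul_weight_right_le {b₁ b₂ : FormalComm X} (h : IsBasic r (b₁.comm b₂)) :
    2 * b₂.weight ≤ (b₁.comm b₂).weight := by
  cases h with
  | comm _ _ _ _ hlt _ =>
    have := weight_le_of_rel hwt hlt
    simp only [weight]
    omega

theorem isBasic_comm_of_weight_lt_two_mul {β α : FormalComm X} (hβ : IsBasic r β)
    (hα : IsBasic r α) (hαβ : r α β) (hw : β.weight < 2 * α.weight) :
    IsBasic r (comm β α) := by
  refine .comm β α hβ hα hαβ ?_
  rintro b₁ b₂ rfl
  have := hβ.two_mul_weight_right_le hwt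
  exact asymm (hwt b₂ α (by omega))

end WeightRefiningOrder

end FormalComm

theorem comm_isBasic_of_weights_B_general {X : Type}
    (r : FormalComm X → FormalComm X → Prop)
    (hr : IsStrictTotalOrder (FormalComm X) r)
    (hwt : ∀ a b : FormalComm X, a.weight < b.weight → r a b)
    (c₁ c₂ n : ℕ)
    (hineq : 2 * n + c₁ < 2 * c₂ + 2)
    (β α : FormalComm X) (hβ : FormalComm.IsBasic r β) (hα : FormalComm.IsBasic r α)
    (hab : r α β)
    (hαlo : c₂ + 1 ≤ α.weight)
    (hsum : β.weight + α.weight ≤ 2 * n + c₁ + c₂ + 1) :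
    FormalComm.IsBasic r (.comm β α) :=
  haveI := hr
  FormalComm.isBasic_comm_of_weight_lt_two_mul hwt hβ hα hab (by omega)

/-- Lemma 2.2(i): if `2n - 2 < 2c₂ - c₁` (stated as `2n + c₁ < 2c₂ + 2`), `c₁ ≥ c₂ ≥ 1`,
and `β > α` are basic commutators with `wt(β) ≥ c₁+n+1`, `wt(α) ≥ c₂+1`, and
`wt(β) + wt(α) ≤ 2n + c₁ + c₂ + 1`, then `[β,α]` is a basic commutator. -/
theorem comm_isBasic_of_weights_B {X : Type}
    (r : FormalComm X → FormalComm X → Prop)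
    (hr : IsStrictTotalOrder (FormalComm X) r)
    (hwt : ∀ a b : FormalComm X, a.weight < b.weight → r a b)
    (c₁ c₂ n : ℕ) (hc : c₂ ≤ c₁) (hc₂ : 1 ≤ c₂) (hn : 1 ≤ n)
    (hineq : 2 * n + c₁ < 2 * c₂ + 2)
    (β α : FormalComm X) (hβ : FormalComm.IsBasic r β) (hα : FormalComm.IsBasic r α)
    (hab : r α β)
    (hβlo : c₁ + n + 1 ≤ β.weight) (hαlo : c₂ + 1 ≤ α.weight)
    (hsum : β.weight + α.weight ≤ 2 * n + c₁ + c₂ + 1) :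
    FormalComm.IsBasic r (.comm β α) :=
  comm_isBasic_of_weights_B_general r hr hwt c₁ c₂ n hineq β α hβ hα hab hαlo hsum
end

section
/- Let F be a free group and n−1 ≤ c₂ ≤ c₁. Then [γ_{c₁+n+1}(F), γ_{c₂+1}(F)] is generated modulo γ_{c₁+c₂+2n+2}(F) by the commutators [β,α] with β, α basic commutators, β > α, wt(β) ≥ c₁+n+1, wt(α) ≥ c₂+1, and wt(β)+wt(α) ≤ 2n+c₁+c₂+1. -/
open scoped commutatorElement

/-!
By Hall's collection process, `γ_{m+1}(F)` is generated by basic commutators of weight at least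
`m + 1` modulo any deeper term `γ_M(F)`: a commutator `[[b₁,b₂],a]` with `a < b₂` is rewritten by
the Jacobi identity (valid modulo the next term of the lower central series) into commutators
of pairs lying strictly above `a`; this terminates because only finitely many formal
commutators of bounded weight have their leaves in a given finite set. Expanding
`[γ_{c₁+n+1}, γ_{c₂+1}]` bilinearly in these generators, the error terms have weight at least
`c₁ + 2c₂ + n + 3 ≥ c₁ + c₂ + 2n + 2` (as `n ≤ c₂ + 1`), and the pairs `[β, α]` of total weight
above `c₁ + c₂ + 2n + 1` already lie in `γ_{c₁+c₂+2n+2}`; since `c₂ ≤ c₁`, the surviving pairs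
have `wt α < wt β`, hence `α < β`.

Mathlib indexes the lower central series from `0`: `lowerCentralSeries k` is `γ_{k+1}`.
-/

namespace Subgroup

variable {G : Type*} [Group G]

theorem commutator_commutator_le_of_rotate {H₁ H₂ H₃ N : Subgroup G} [N.Normal]
    (h1 : ⁅⁅H₂, H₃⁆, H₁⁆ ≤ N) (h2 : ⁅⁅H₃, H₁⁆, H₂⁆ ≤ N) : ⁅⁅H₁, H₂⁆, H₃⁆ ≤ N := by
  rw [← QuotientGroup.ker_mk' N, ← map_eq_bot_iff, map_commutator, map_commutator] at *
  exact commutator_commutator_eq_bot_of_rotate h1 h2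

theorem commutator_lowerCentralSeries_le (m n : ℕ) :
    ⁅(⊤ : Subgroup G).lowerCentralSeries m, (⊤ : Subgroup G).lowerCentralSeries n⁆ ≤
      (⊤ : Subgroup G).lowerCentralSeries (m + n + 1) := by
  induction n generalizing m with
  | zero => rfl
  | succ n ih =>
    rw [lowerCentralSeries_succ ⊤ n, commutator_comm]
    refine commutator_commutator_le_of_rotate ?_ ?_
    · rw [commutator_comm ⊤, ← lowerCentralSeries_succ]
      exact (ih (m + 1)).trans (lowerCentralSeries_antitone ⊤ (by omega))
    · exact (commutator_mono (ih m) le_rfl).trans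
        (lowerCentralSeries_antitone ⊤ (show m + (n + 1) + 1 ≤ m + n + 1 + 1 by omega))

end Subgroup

section CommutatorCalculus

variable {G : Type*} [Group G]

open Subgroup

local notation "γ" => Subgroup.lowerCentralSeries (⊤ : Subgroup G)

theorem commutatorElement_mem_lowerCentralSeries {g h : G} {m n : ℕ} (hg : g ∈ γ m)
    (hh : h ∈ γ n) : ⁅g, h⁆ ∈ γ (m + n + 1) :=
  commutator_lowerCentralSeries_le m n (commutator_mem_commutator hg hh)

theorem commutator_commutator_sup_lowerCentralSeries_le (i j : ℕ) :
    ⁅⁅γ i, γ j⁆, γ i ⊔ γ j⁆ ≤ γ (i + j + min i j + 2) := by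
  have hsup : γ i ⊔ γ j ≤ γ (min i j) := sup_le
    (Subgroup.lowerCentralSeries_antitone _ (min_le_left i j))
    (Subgroup.lowerCentralSeries_antitone _ (min_le_right i j))
  exact (commutator_mono (commutator_lowerCentralSeries_le i j) hsup).trans
    ((commutator_lowerCentralSeries_le _ _).trans
      (Subgroup.lowerCentralSeries_antitone _ (by omega)))

theorem commutatorElement_mem_of_mem_closure {U T : Subgroup G} {P : Set G} {h : G}
    (hPU : P ⊆ U) (habs : ∀ u ∈ U, ∀ v ∈ U, ⁅⁅u, h⁆, v⁆ ∈ T) (hP : ∀ p ∈ P, ⁅p, h⁆ ∈ T)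
    {g : G} (hg : g ∈ Subgroup.closure P) : ⁅g, h⁆ ∈ T := by
  have hU : Subgroup.closure P ≤ U := (closure_le U).mpr hPU
  induction hg using closure_induction with
  | mem p hp => exact hP p hp
  | one => simp
  | mul x y hx hy ihx ihy =>
    have key : ⁅x * y, h⁆ = ⁅⁅y, h⁆, x⁆⁻¹ * ⁅y, h⁆ * ⁅x, h⁆ := by
      simp only [commutatorElement_def]; group
    rw [key]
    exact mul_mem (mul_mem (inv_mem (habs y (hU hy) x (hU hx))) ihy) ihx
  | inv x hx ihx =>
    have key : ⁅x⁻¹, h⁆ = ⁅x, h⁆⁻¹ * ⁅⁅x, h⁆, x⁻¹⁆ := by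
      simp only [commutatorElement_def]; group
    rw [key]
    exact mul_mem (inv_mem ihx) (habs x (hU hx) x⁻¹ (inv_mem (hU hx)))

theorem commutator_closure_le {U V T : Subgroup G} {P Q : Set G} (hPU : P ⊆ U) (hQV : Q ⊆ V)
    (habs : ⁅⁅U, V⁆, U ⊔ V⁆ ≤ T) (hPQ : ∀ p ∈ P, ∀ q ∈ Q, ⁅p, q⁆ ∈ T) :
    ⁅Subgroup.closure P, Subgroup.closure Q⁆ ≤ T := by
  rw [commutator_le]
  intro g hg h hh
  have hhV : h ∈ V := (closure_le V).mpr hQV hh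
  refine commutatorElement_mem_of_mem_closure hPU (fun u hu v hv => habs
    (commutator_mem_commutator (commutator_mem_commutator hu hhV) (mem_sup_left hv)))
    (fun p hp => ?_) hg
  rw [← commutatorElement_inv]
  refine inv_mem (commutatorElement_mem_of_mem_closure hQV (fun u hu v hv => ?_)
    (fun q hq => by rw [← commutatorElement_inv]; exact inv_mem (hPQ p hp q hq)) hh)
  rw [← commutatorElement_inv p u]
  exact habs (commutator_mem_commutator
    (inv_mem (commutator_mem_commutator (hPU hp) hu)) (mem_sup_right hv))

theorem commutatorElement_commutatorElement_eq_of_lowerCentralSeries_eq_bot {p q s : ℕ}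
    (hG : γ (p + q + s + 3) = ⊥) {x y z : G} (hx : x ∈ γ p) (hy : y ∈ γ q) (hz : z ∈ γ s) :
    ⁅⁅x, y⁆, z⁆ = ⁅⁅x, z⁆, y⁆ * ⁅x, ⁅y, z⁆⁆ := by
  have vanish : ∀ {k : ℕ} {g : G}, p + q + s + 3 ≤ k → g ∈ γ k → g = 1 := fun hk hg =>
    mem_bot.mp (hG ▸ Subgroup.lowerCentralSeries_antitone _ hk hg)
  have central : ∀ {k : ℕ} {g : G}, p + q + s + 2 ≤ k → g ∈ γ k → ∀ h, Commute g h :=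
    fun hk hg h => (commutatorElement_eq_one_iff_mul_comm).mp
      (vanish (by omega) (commutatorElement_mem_lowerCentralSeries (n := 0) hg (mem_top h)))
  -- conjugating the inner argument changes nothing in the top degree
  have conj : ∀ {u b c : G}, ⁅u, ⁅b, c⁆⁆ = 1 → (∀ h, Commute ⁅u, c⁆ h) →
      ⁅u, b * c * b⁻¹⁆ = ⁅u, c⁆ := fun {u b c} h1 h2 => by
    rw [show b * c * b⁻¹ = ⁅b, c⁆ * c by simp only [commutatorElement_def]; group,
      commutatorElement_mul_right_eq_mul_conj, h1, one_mul, ← (h2 _).eq, mul_inv_cancel_right]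
  have hxy := commutatorElement_mem_lowerCentralSeries hx hy
  have hyz := commutatorElement_mem_lowerCentralSeries hy hz
  have hzx := commutatorElement_mem_lowerCentralSeries hz hx
  have hallWitt := commutatorElement_commutatorElement_conj_mul x y z
  rw [conj (vanish (by omega) (commutatorElement_mem_lowerCentralSeries hxy hyz))
      (central (by omega) (commutatorElement_mem_lowerCentralSeries hxy hz)),
    conj (vanish (by omega) (commutatorElement_mem_lowerCentralSeries hyz hzx))
      (central (by omega) (commutatorElement_mem_lowerCentralSeries hyz hx)),
    conj (vanish (by omega) (commutatorElement_mem_lowerCentralSeries hzx hxy))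
      (central (by omega) (commutatorElement_mem_lowerCentralSeries hzx hy))] at hallWitt
  have hyzx : ⁅⁅y, z⁆, x⁆ = ⁅x, ⁅y, z⁆⁆⁻¹ := (commutatorElement_inv _ _).symm
  have hzxy : ⁅⁅z, x⁆, y⁆ = ⁅⁅x, z⁆, y⁆⁻¹ := by
    rw [commutatorElement_inv, ← commutatorElement_inv x z, commutatorElement_inv_left,
      ← (central (by omega) (commutatorElement_mem_lowerCentralSeries hy
        (commutatorElement_mem_lowerCentralSeries hx hz)) _).eq, inv_mul_cancel_right]
  rw [hyzx, hzxy, mul_assoc, ← mul_inv_rev, mul_inv_eq_one] at hallWitt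
  exact hallWitt

theorem commutatorElement_commutatorElement_mem {T : Subgroup G} {p q s : ℕ}
    (hT : γ (p + q + s + 3) ≤ T) {x y z : G} (hx : x ∈ γ p) (hy : y ∈ γ q) (hz : z ∈ γ s)
    (hxzy : ⁅⁅x, z⁆, y⁆ ∈ T) (hxyz : ⁅x, ⁅y, z⁆⁆ ∈ T) : ⁅⁅x, y⁆, z⁆ ∈ T := by
  set N := γ (p + q + s + 3)
  let f := QuotientGroup.mk' N
  have hmap : ∀ k, (γ k).map f = (⊤ : Subgroup (G ⧸ N)).lowerCentralSeries k := fun k => by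
    rw [map_lowerCentralSeries, map_top_of_surjective f (QuotientGroup.mk'_surjective N)]
  have hQ : (⊤ : Subgroup (G ⧸ N)).lowerCentralSeries (p + q + s + 3) = ⊥ := by
    rw [← hmap, Subgroup.map_eq_bot_iff, QuotientGroup.ker_mk']
  have h := commutatorElement_commutatorElement_eq_of_lowerCentralSeries_eq_bot hQ
    (hmap p ▸ mem_map_of_mem f hx) (hmap q ▸ mem_map_of_mem f hy) (hmap s ▸ mem_map_of_mem f hz)
  simp only [← map_commutatorElement, ← map_mul] at h
  have hN : (⁅⁅x, z⁆, y⁆ * ⁅x, ⁅y, z⁆⁆)⁻¹ * ⁅⁅x, y⁆, z⁆ ∈ T :=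
    hT ((QuotientGroup.eq (s := N)).mp h.symm)
  simpa only [mul_inv_cancel_left] using mul_mem (mul_mem hxzy hxyz) hN

end CommutatorCalculus

namespace FormalComm

variable {X : Type}

local notation "γ" => Subgroup.lowerCentralSeries (⊤ : Subgroup (FreeGroup X))

def leaves : FormalComm X → Set X
  | of x => {x}
  | comm b a => leaves b ∪ leaves a

theorem one_le_weight (c : FormalComm X) : 1 ≤ c.weight := by
  induction c with
  | of x => exact le_rfl
  | comm b a ihb _ => exact ihb.trans (Nat.le_add_right _ _)

theorem finite_leaves (c : FormalComm X) : c.leaves.Finite := by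
  induction c with
  | of x => exact Set.finite_singleton x
  | comm b a ihb iha => exact ihb.union iha

theorem finite_setOf_leaves_subset_weight_le {L : Set X} (hL : L.Finite) (W : ℕ) :
    {c : FormalComm X | c.leaves ⊆ L ∧ c.weight ≤ W}.Finite := by
  induction W with
  | zero =>
    refine Set.finite_empty.subset ?_
    rintro c ⟨-, hc⟩
    exact absurd hc (by have := c.one_le_weight; omega)
  | succ W ih =>
    refine ((hL.image of).union (ih.image2 comm ih)).subset ?_
    rintro (x | ⟨b, a⟩) ⟨hL', hw⟩
    · exact Or.inl ⟨x, hL' rfl, rfl⟩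
    · have := b.one_le_weight
      have := a.one_le_weight
      have hw' : b.weight + a.weight ≤ W + 1 := hw
      exact Or.inr ⟨b, ⟨Set.subset_union_left.trans hL', by omega⟩, a,
        ⟨Set.subset_union_right.trans hL', by omega⟩, rfl⟩

theorem eval_mem_lowerCentralSeries (c : FormalComm X) : c.eval ∈ γ (c.weight - 1) := by
  induction c with
  | of x => exact Subgroup.mem_top _
  | comm b a ihb iha =>
    have := b.one_le_weight
    have := a.one_le_weight
    exact Subgroup.lowerCentralSeries_antitone _ (show b.weight + a.weight - 1 ≤ _ by omega)
      (commutatorElement_mem_lowerCentralSeries ihb iha)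

theorem eval_mem_lowerCentralSeries_of_lt {c : FormalComm X} {k : ℕ} (h : k < c.weight) :
    c.eval ∈ γ k :=
  Subgroup.lowerCentralSeries_antitone _ (by omega) c.eval_mem_lowerCentralSeries

variable (r : FormalComm X → FormalComm X → Prop)

-- The termination measure of collection; for infinite `L` the `ncard` would be a junk `0`.
noncomputable def numAbove (L : Set X) (W : ℕ) (a : FormalComm X) : ℕ :=
  {t | t.leaves ⊆ L ∧ t.weight ≤ W ∧ r a t}.ncard

theorem numAbove_lt [IsStrictOrder (FormalComm X) r] {L : Set X} (hL : L.Finite) {W : ℕ}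
    {a a' : FormalComm X} (h : r a a') (hL' : a'.leaves ⊆ L) (hW : a'.weight ≤ W) :
    numAbove r L W a' < numAbove r L W a := by
  refine Set.ncard_lt_ncard ⟨fun t ⟨htL, htW, ht⟩ => ⟨htL, htW, _root_.trans h ht⟩,
    fun hsub => irrefl a' (hsub ⟨hL', hW, h⟩).2.2⟩ ?_
  exact (finite_setOf_leaves_subset_weight_le hL W).subset fun t ht => ⟨ht.1, ht.2.1⟩

def basicEvals (L : Set X) (w : ℕ) : Set (FreeGroup X) :=
  eval '' {c | c.IsBasic r ∧ c.leaves ⊆ L ∧ c.weight = w}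

def basicSpan (L : Set X) (w : ℕ) : Subgroup (FreeGroup X) :=
  Subgroup.closure (basicEvals r L w) ⊔ γ w

theorem basicSpan_mono {L L' : Set X} (h : L ⊆ L') (w : ℕ) :
    basicSpan r L w ≤ basicSpan r L' w := by
  refine sup_le_sup_right (Subgroup.closure_mono (Set.image_mono ?_)) _
  exact fun c ⟨hc, hcL, hcw⟩ => ⟨hc, hcL.trans h, hcw⟩

theorem commutatorElement_mem_of_mem_basicSpan {L : Set X} {w j : ℕ} {T : Subgroup (FreeGroup X)}
    {g h : FreeGroup X} (hg : g ∈ basicSpan r L w) (hh : h ∈ γ j) (hT : γ (w + j + 1) ≤ T)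
    (hbasic : ∀ c : FormalComm X, c.IsBasic r → c.leaves ⊆ L → c.weight = w → ⁅c.eval, h⁆ ∈ T) :
    ⁅g, h⁆ ∈ T := by
  rw [basicSpan, ← Subgroup.closure_eq (γ w), ← Subgroup.closure_union] at hg
  refine commutator_closure_le (U := γ (w - 1)) (V := γ j) (Q := {h}) ?_
    (Set.singleton_subset_iff.mpr hh) ?_ ?_
    (Subgroup.commutator_mem_commutator hg (Subgroup.subset_closure rfl))
  · rintro _ (⟨c, ⟨-, -, rfl⟩, rfl⟩ | hp)
    · exact c.eval_mem_lowerCentralSeries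
    · exact Subgroup.lowerCentralSeries_antitone _ (Nat.sub_le w 1) hp
  · exact (commutator_commutator_sup_lowerCentralSeries_le _ _).trans
      ((Subgroup.lowerCentralSeries_antitone _ (by omega)).trans hT)
  · rintro _ (⟨c, ⟨hc, hcL, hcw⟩, rfl⟩ | hp) _ rfl
    · exact hbasic c hc hcL hcw
    · exact hT (Subgroup.lowerCentralSeries_antitone _ (by omega)
        (commutatorElement_mem_lowerCentralSeries hp hh))

variable {r}

-- Jacobi: `[[b₁,b₂],a] ≡ [[b₁,a],b₂] [b₁,[b₂,a]]`, and every pair on the right lies above `a`.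
theorem commutatorElement_commutatorElement_mem_basicSpan
    (hwt : ∀ a b : FormalComm X, a.weight < b.weight → r a b) {L : Set X} {w : ℕ}
    {b₁ b₂ a : FormalComm X} (hb₁ : b₁.IsBasic r) (hb₂ : b₂.IsBasic r) (hab₁ : r a b₁)
    (hab₂ : r a b₂) (hL₁ : b₁.leaves ⊆ L) (hL₂ : b₂.leaves ⊆ L)
    (hw : b₁.weight + b₂.weight + a.weight = w)
    (h₁ : ⁅b₁.eval, a.eval⁆ ∈ basicSpan r L (b₁.weight + a.weight))
    (h₂ : ⁅b₂.eval, a.eval⁆ ∈ basicSpan r L (b₂.weight + a.weight))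
    (hpair : ∀ c d : FormalComm X, c.IsBasic r → d.IsBasic r → r a c → r a d →
      c.leaves ⊆ L → d.leaves ⊆ L → c.weight + d.weight = w → ⁅c.eval, d.eval⁆ ∈ basicSpan r L w) :
    ⁅⁅b₁.eval, b₂.eval⁆, a.eval⁆ ∈ basicSpan r L w := by
  have hT : ∀ {k}, w ≤ k → γ k ≤ basicSpan r L w := fun hk =>
    (Subgroup.lowerCentralSeries_antitone _ hk).trans le_sup_right
  have := b₁.one_le_weight
  have := b₂.one_le_weight
  have := a.one_le_weight
  refine commutatorElement_commutatorElement_mem (hT (by omega)) b₁.eval_mem_lowerCentralSeries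
    b₂.eval_mem_lowerCentralSeries a.eval_mem_lowerCentralSeries ?_ ?_
  · exact commutatorElement_mem_of_mem_basicSpan r h₁ b₂.eval_mem_lowerCentralSeries
      (hT (by omega)) fun c hc hcL hcw =>
        hpair c b₂ hc hb₂ (hwt a c (by omega)) hab₂ hcL hL₂ (by omega)
  · rw [← commutatorElement_inv]
    refine inv_mem (commutatorElement_mem_of_mem_basicSpan r h₂ b₁.eval_mem_lowerCentralSeries
      (hT (by omega)) fun d hd hdL hdw => ?_)
    rw [← commutatorElement_inv]
    exact inv_mem (hpair b₁ d hb₁ hd hab₁ (hwt a d (by omega)) hL₁ hdL (by omega))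

theorem commutatorElement_eval_mem_basicSpan_of_lt [IsStrictTotalOrder (FormalComm X) r]
    (hwt : ∀ a b : FormalComm X, a.weight < b.weight → r a b) {L : Set X} (hL : L.Finite)
    {b a : FormalComm X} (hb : b.IsBasic r) (ha : a.IsBasic r) (hab : r a b)
    (hbL : b.leaves ⊆ L) (haL : a.leaves ⊆ L) :
    ⁅b.eval, a.eval⁆ ∈ basicSpan r L (b.weight + a.weight) := by
  induction hw : b.weight + a.weight using Nat.strong_induction_on generalizing b a with
  | _ w ihw =>
  induction hk : numAbove r L w a using Nat.strong_induction_on generalizing b a with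
  | _ k ihk =>
  have hpair : ∀ c d : FormalComm X, c.IsBasic r → d.IsBasic r → r a c → r a d →
      c.leaves ⊆ L → d.leaves ⊆ L → c.weight + d.weight = w →
      ⁅c.eval, d.eval⁆ ∈ basicSpan r L w := by
    intro c d hc hd hac had hcL hdL hcd
    have := c.one_le_weight
    have := d.one_le_weight
    rcases trichotomous_of r c d with hlt | rfl | hgt
    · rw [← commutatorElement_inv]
      exact inv_mem (ihk _ (hk ▸ numAbove_lt r hL hac hcL (by omega)) hd hc hlt hdL hcL
        (by omega) rfl)
    · simp
    · exact ihk _ (hk ▸ numAbove_lt r hL had hdL (by omega)) hc hd hgt hcL hdL hcd rfl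
  by_cases hbad : ∃ b₁ b₂, b = comm b₁ b₂ ∧ r a b₂
  · obtain ⟨b₁, b₂, rfl, hab₂⟩ := hbad
    obtain _ | ⟨_, _, hb₁, hb₂, h21, -⟩ := hb
    rw [leaves, Set.union_subset_iff] at hbL
    have hw' : b₁.weight + b₂.weight + a.weight = w := hw
    have := b₁.one_le_weight
    have := b₂.one_le_weight
    exact commutatorElement_commutatorElement_mem_basicSpan hwt hb₁ hb₂ (_root_.trans hab₂ h21)
      hab₂ hbL.1 hbL.2 hw'
      (ihw _ (by omega) hb₁ ha (_root_.trans hab₂ h21) hbL.1 haL rfl)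
      (ihw _ (by omega) hb₂ ha hab₂ hbL.2 haL rfl) hpair
  · simp only [not_exists, not_and] at hbad
    exact Subgroup.mem_sup_left (Subgroup.subset_closure
      ⟨b.comm a, ⟨.comm b a hb ha hab hbad, Set.union_subset hbL haL, hw⟩, rfl⟩)

theorem commutatorElement_eval_mem_basicSpan [IsStrictTotalOrder (FormalComm X) r]
    (hwt : ∀ a b : FormalComm X, a.weight < b.weight → r a b) {b a : FormalComm X}
    (hb : b.IsBasic r) (ha : a.IsBasic r) :
    ⁅b.eval, a.eval⁆ ∈ basicSpan r Set.univ (b.weight + a.weight) := by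
  have hL := b.finite_leaves.union a.finite_leaves
  rcases trichotomous_of r a b with hab | rfl | hba
  · exact basicSpan_mono r (Set.subset_univ _) _ (commutatorElement_eval_mem_basicSpan_of_lt
      hwt hL hb ha hab Set.subset_union_left Set.subset_union_right)
  · simp
  · rw [← commutatorElement_inv, add_comm]
    exact inv_mem (basicSpan_mono r (Set.subset_univ _) _
      (commutatorElement_eval_mem_basicSpan_of_lt hwt hL ha hb hba
        Set.subset_union_right Set.subset_union_left))

theorem lowerCentralSeries_le_basicSpan [IsStrictTotalOrder (FormalComm X) r]
    (hwt : ∀ a b : FormalComm X, a.weight < b.weight → r a b) (m : ℕ) :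
    γ m ≤ basicSpan r Set.univ (m + 1) := by
  induction m with
  | zero =>
    rw [Subgroup.lowerCentralSeries_zero, ← FreeGroup.closure_range_of]
    refine (Subgroup.closure_mono ?_).trans le_sup_left
    rintro _ ⟨x, rfl⟩
    exact ⟨of x, ⟨.of x, Set.subset_univ _, rfl⟩, rfl⟩
  | succ m ih =>
    rw [basicSpan, ← Subgroup.closure_eq (γ (m + 1)), ← Subgroup.closure_union] at ih
    calc γ (m + 1) = ⁅γ m, ⊤⁆ := rfl
      _ ≤ ⁅Subgroup.closure (basicEvals r Set.univ (m + 1) ∪ γ (m + 1)),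
          Subgroup.closure (Set.range FreeGroup.of)⁆ :=
        Subgroup.commutator_mono ih (FreeGroup.closure_range_of X).ge
      _ ≤ basicSpan r Set.univ (m + 1 + 1) := by
        refine commutator_closure_le (U := γ m) (V := γ 0) ?_ (fun _ _ => Subgroup.mem_top _)
          ((commutator_commutator_sup_lowerCentralSeries_le m 0).trans
            ((Subgroup.lowerCentralSeries_antitone _ (by omega)).trans le_sup_right)) ?_
        · rintro _ (⟨c, ⟨-, -, hcw⟩, rfl⟩ | hp)
          · exact eval_mem_lowerCentralSeries_of_lt (by omega)
          · exact Subgroup.lowerCentralSeries_antitone _ (Nat.le_succ m) hp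
        · rintro _ (⟨c, ⟨hc, -, hcw⟩, rfl⟩ | hp) _ ⟨x, rfl⟩
          · have h := commutatorElement_eval_mem_basicSpan hwt hc (.of x)
            rwa [show c.weight + (of x).weight = m + 1 + 1 by rw [hcw]; rfl] at h
          · exact Subgroup.mem_sup_right (commutatorElement_mem_lowerCentralSeries (n := 0) hp
              (Subgroup.mem_top (FreeGroup.of x)))

theorem lowerCentralSeries_le_closure_basic_sup [IsStrictTotalOrder (FormalComm X) r]
    (hwt : ∀ a b : FormalComm X, a.weight < b.weight → r a b) (m M : ℕ) :
    γ m ≤ Subgroup.closure (eval '' {c | c.IsBasic r ∧ m < c.weight}) ⊔ γ M := by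
  induction M with
  | zero => exact le_sup_of_le_right le_top
  | succ M ih =>
    rcases lt_or_ge M m with hM | hM
    · exact le_sup_of_le_right (Subgroup.lowerCentralSeries_antitone _ hM)
    · refine ih.trans (sup_le le_sup_left ((lowerCentralSeries_le_basicSpan hwt M).trans
        (sup_le_sup_right (Subgroup.closure_mono ?_) _)))
      rintro _ ⟨c, ⟨hc, -, hcw⟩, rfl⟩
      exact ⟨c, ⟨hc, by omega⟩, rfl⟩

theorem commutator_lowerCentralSeries_le_of_basic [IsStrictTotalOrder (FormalComm X) r]
    (hwt : ∀ a b : FormalComm X, a.weight < b.weight → r a b) {a b d : ℕ}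
    (hda : d ≤ 2 * a + 1) (hdb : d ≤ a + 2 * b + 2) {T : Subgroup (FreeGroup X)}
    (hT : γ d ≤ T)
    (hS : ∀ β α : FormalComm X, β.IsBasic r → α.IsBasic r → r α β → a < β.weight →
      b < α.weight → β.weight + α.weight ≤ d → ⁅β.eval, α.eval⁆ ∈ T) :
    ⁅γ a, γ b⁆ ≤ T := by
  have hβ := lowerCentralSeries_le_closure_basic_sup hwt a (a + d)
  have hα := lowerCentralSeries_le_closure_basic_sup hwt b (b + d)
  have hT' : ∀ {k}, d ≤ k → γ k ≤ T := fun hk =>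
    (Subgroup.lowerCentralSeries_antitone _ hk).trans hT
  rw [← Subgroup.closure_eq (γ (a + d)), ← Subgroup.closure_union] at hβ
  rw [← Subgroup.closure_eq (γ (b + d)), ← Subgroup.closure_union] at hα
  refine (Subgroup.commutator_mono hβ hα).trans (commutator_closure_le (U := γ a) (V := γ b)
    ?_ ?_ ((commutator_commutator_sup_lowerCentralSeries_le a b).trans (hT' (by omega))) ?_)
  · rintro _ (⟨β, ⟨-, hβw⟩, rfl⟩ | hp)
    exacts [eval_mem_lowerCentralSeries_of_lt hβw,
      Subgroup.lowerCentralSeries_antitone _ (Nat.le_add_right a d) hp]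
  · rintro _ (⟨α, ⟨-, hαw⟩, rfl⟩ | hq)
    exacts [eval_mem_lowerCentralSeries_of_lt hαw,
      Subgroup.lowerCentralSeries_antitone _ (Nat.le_add_right b d) hq]
  · rintro _ (⟨β, ⟨hβ, hβw⟩, rfl⟩ | hp) _ (⟨α, ⟨hα, hαw⟩, rfl⟩ | hq)
    · by_cases hsum : β.weight + α.weight ≤ d
      · exact hS β α hβ hα (hwt α β (by omega)) hβw hαw hsum
      · exact hT' le_rfl (eval_mem_lowerCentralSeries_of_lt (c := β.comm α)
          (show d < β.weight + α.weight by omega))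
    · exact hT' (by omega) (commutatorElement_mem_lowerCentralSeries
        (eval_mem_lowerCentralSeries_of_lt hβw) hq)
    · exact hT' (by omega) (commutatorElement_mem_lowerCentralSeries hp
        (eval_mem_lowerCentralSeries_of_lt hαw))
    · exact hT' (by omega) (commutatorElement_mem_lowerCentralSeries hp hq)

end FormalComm

theorem commutator_gamma_generated_mod_gamma_general {X : Type}
    (r : FormalComm X → FormalComm X → Prop)
    (hr : IsStrictTotalOrder (FormalComm X) r)
    (hwt : ∀ a b : FormalComm X, a.weight < b.weight → r a b)
    (c₁ c₂ n : ℕ) (hc : c₂ ≤ c₁) (hnc : n ≤ c₂ + 1) :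
    let F := FreeGroup X
    let K : Subgroup F := (⊤ : Subgroup F).lowerCentralSeries (c₁ + c₂ + 2 * n + 1)
    let S : Set F := {g | ∃ β α : FormalComm X,
      g = ⁅β.eval, α.eval⁆ ∧ FormalComm.IsBasic r β ∧ FormalComm.IsBasic r α ∧ r α β ∧
      c₁ + n + 1 ≤ β.weight ∧ c₂ + 1 ≤ α.weight ∧
      β.weight + α.weight ≤ 2 * n + c₁ + c₂ + 1}
    ⁅(⊤ : Subgroup F).lowerCentralSeries (c₁ + n), (⊤ : Subgroup F).lowerCentralSeries c₂⁆ ⊔ K =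
      Subgroup.closure S ⊔ K := by
  intro F K S
  have := hr
  refine le_antisymm (sup_le ?_ le_sup_right) (sup_le ((Subgroup.closure_le _).mpr ?_) le_sup_right)
  · exact FormalComm.commutator_lowerCentralSeries_le_of_basic hwt (a := c₁ + n) (b := c₂)
      (d := c₁ + c₂ + 2 * n + 1) (by omega) (by omega)
      le_sup_right fun β α hβ hα hαβ hβw hαw hsum =>
        Subgroup.mem_sup_left (Subgroup.subset_closure ⟨β, α, rfl, hβ, hα, hαβ, hβw, hαw, by omega⟩)
  · rintro _ ⟨β, α, rfl, -, -, -, hβw, hαw, -⟩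
    exact Subgroup.mem_sup_left (Subgroup.commutator_mem_commutator
      (FormalComm.eval_mem_lowerCentralSeries_of_lt hβw)
      (FormalComm.eval_mem_lowerCentralSeries_of_lt hαw))

/-- Lemma 2.7(i): for a free group `F` on `X` and `n - 1 ≤ c₂ ≤ c₁`, the subgroup
`[γ_{c₁+n+1}(F), γ_{c₂+1}(F)]` is generated modulo `γ_{c₁+c₂+2n+2}(F)` by the commutators
`[β,α]` with `β > α` basic, `wt(β) ≥ c₁+n+1`, `wt(α) ≥ c₂+1`, `wt(β)+wt(α) ≤ 2n+c₁+c₂+1`. -/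
theorem commutator_gamma_generated_mod_gamma {X : Type}
    (r : FormalComm X → FormalComm X → Prop)
    (hr : IsStrictTotalOrder (FormalComm X) r)
    (hwt : ∀ a b : FormalComm X, a.weight < b.weight → r a b)
    (c₁ c₂ n : ℕ) (hc : c₂ ≤ c₁) (hc₂ : 1 ≤ c₂) (hn : 1 ≤ n) (hnc : n ≤ c₂ + 1) :
    let F := FreeGroup X
    let K : Subgroup F := (⊤ : Subgroup F).lowerCentralSeries (c₁ + c₂ + 2 * n + 1)
    let S : Set F := {g | ∃ β α : FormalComm X,
      g = ⁅β.eval, α.eval⁆ ∧ FormalComm.IsBasic r β ∧ FormalComm.IsBasic r α ∧ r α β ∧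
      c₁ + n + 1 ≤ β.weight ∧ c₂ + 1 ≤ α.weight ∧
      β.weight + α.weight ≤ 2 * n + c₁ + c₂ + 1}
    ⁅(⊤ : Subgroup F).lowerCentralSeries (c₁ + n), (⊤ : Subgroup F).lowerCentralSeries c₂⁆ ⊔ K =
      Subgroup.closure S ⊔ K :=
  commutator_gamma_generated_mod_gamma_general r hr hwt c₁ c₂ n hc hnc
end
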